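/- arXiv:2312.07749 — 6 statements merged into one kernel-verified Lean document; each statement's English description precedes it below -/
import Mathlib

section
/- Let X be a topological space, S an exceedingly rich family of closed subspaces of X, and φ the function constructed by closing off under: (i) for each x ∈ X a chosen separable F_x ∈ S containing x, (ii) for each pair of separable G, H ∈ S a chosen separable F_{G,H} ∈ S containing G ∪ H, and (iii) chosen countable dense subsets D_F of each separable F ∈ S. Then φ is a Skolem-like function and {closure(φ(C)) : C ⊆ X} ⊆ S. -/
open Cardinal TopologicalSpace

variable {X : Type*} [TopologicalSpace X]

/-- The density character of a subset `A`. -/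
noncomputable def dens (A : Set X) : Cardinal :=
  sInf {c : Cardinal | ∃ D : Set X, D ⊆ A ∧ A ⊆ closure D ∧ Cardinal.mk D = c}

/-- Exceedingly rich family of closed subspaces. -/
def ExceedinglyRich (S : Set (Set X)) : Prop :=
  (∀ F ∈ S, IsClosed F) ∧
  (∀ Y : Set X, ∃ F ∈ S, Y ⊆ F ∧ dens F = max (dens Y) Cardinal.aleph0) ∧
  (∀ A : Set (Set X), A ⊆ S → A.Nonempty → DirectedOn (· ⊆ ·) A → closure (⋃₀ A) ∈ S)

/-- Skolem-like function on the power set of `I`. -/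
def SkolemLike {I : Type*} (φ : Set I → Set I) : Prop :=
  (∀ A : Set I, A ⊆ φ A ∧ Cardinal.mk (φ A) = max (Cardinal.mk A) Cardinal.aleph0) ∧
  (∀ A B : Set I, A ⊆ B → φ A ⊆ φ B) ∧
  (∀ 𝒜 : Set (Set I), 𝒜.Nonempty → DirectedOn (· ⊆ ·) 𝒜 →
    φ (⋃₀ 𝒜) = ⋃ A ∈ 𝒜, φ A)

/-- The auxiliary families `ψ_k(C)`: start with the chosen separable members `F_x`, `x ∈ C ∪ Z`,
and close off under the pairing operation `(G, H) ↦ F_{G,H}` for separable members of `S`. -/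
def psiN (S : Set (Set X)) (Fx : X → Set X) (FGH : Set X → Set X → Set X) (Z : Set X)
    (C : Set X) : ℕ → Set (Set X)
  | 0 => Fx '' (C ∪ Z)
  | (k + 1) => psiN S Fx FGH Z C k ∪
      {F | ∃ G ∈ psiN S Fx FGH Z C k, ∃ H ∈ psiN S Fx FGH Z C k,
        G ∈ S ∧ H ∈ S ∧ IsSeparable G ∧ IsSeparable H ∧ F = FGH G H}

/-- `ψ(C) = ⋃ₖ ψ_k(C)`. -/
def psi (S : Set (Set X)) (Fx : X → Set X) (FGH : Set X → Set X → Set X) (Z : Set X)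
    (C : Set X) : Set (Set X) :=
  ⋃ k, psiN S Fx FGH Z C k

/-- The function `φ(C) = Z ∪ C ∪ ⋃ {D_F : F ∈ ψ(C) separable}`. -/
def phiCon (S : Set (Set X)) (Fx : X → Set X) (FGH : Set X → Set X → Set X)
    (DF : Set X → Set X) (Z : Set X) (C : Set X) : Set X :=
  Z ∪ C ∪ ⋃ F ∈ {F ∈ psi S Fx FGH Z C | IsSeparable F}, DF F

/-!
The members of `ψ(C)` are separable members of `S`, and there are at most `max |C| ℵ₀` of them,
since each stage `ψ_{k+1}(C)` is at most the square of `ψ_k(C)`. Any two members `G, H` of `ψ(C)`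
lie in the member `F_{G,H}` of the next stage, so `ψ(C)` is directed and `closure (⋃ ψ(C)) ∈ S`.
Since `x ∈ F_x` and `D_F ⊆ F`, `φ(C) ⊆ ⋃ ψ(C)`; conversely `φ(C)` contains the dense subset `D_F`
of every member `F`, so the two sets have the same closure. Finally `ψ` and `φ` are built by
finitary operations, so they commute with directed unions, and the infinite set `Z ⊆ φ(C)` gives
`ℵ₀ ≤ |φ(C)|`.
-/

universe u v

theorem Cardinal.mk_iUnion_le_of_le {α : Type u} {ι : Type v} {f : ι → Set α} {c : Cardinal.{u}}
    (hι : lift.{u} #ι ≤ lift.{v} c) (hc : ℵ₀ ≤ c) (hf : ∀ i, #(f i) ≤ c) :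
    #(⋃ i, f i) ≤ c := by
  rw [← lift_le.{v}]
  calc lift.{v} #(⋃ i, f i) ≤ lift.{u} #ι * ⨆ i, lift.{v} #(f i) := mk_iUnion_le_lift f
    _ ≤ lift.{v} c * lift.{v} c := mul_le_mul' hι (ciSup_le' fun i => lift_le.2 (hf i))
    _ = lift.{v} c := mul_eq_self (aleph0_le_lift.2 hc)

section

variable {S : Set (Set X)} {Fx : X → Set X} {FGH : Set X → Set X → Set X} {Z : Set X}

theorem monotone_psiN (C : Set X) : Monotone (psiN S Fx FGH Z C) :=
  monotone_nat_of_le_succ fun _ => Set.subset_union_left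

theorem psiN_mono {C C' : Set X} (h : C ⊆ C') (k : ℕ) :
    psiN S Fx FGH Z C k ⊆ psiN S Fx FGH Z C' k := by
  induction k with
  | zero => exact Set.image_mono (Set.union_subset_union_left Z h)
  | succ k ih =>
    refine Set.union_subset_union ih ?_
    rintro F ⟨G, hG, H, hH, hGH⟩
    exact ⟨G, ih hG, H, ih hH, hGH⟩

theorem psi_mono {C C' : Set X} (h : C ⊆ C') : psi S Fx FGH Z C ⊆ psi S Fx FGH Z C' :=
  Set.iUnion_mono (psiN_mono h)

theorem psi_nonempty (hZ : Z.Nonempty) (C : Set X) : (psi S Fx FGH Z C).Nonempty :=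
  ⟨Fx hZ.some, Set.mem_iUnion.2 ⟨0, Set.mem_image_of_mem Fx (Or.inr hZ.some_mem)⟩⟩

theorem psiN_subset (hFx : ∀ x, Fx x ∈ S ∧ IsSeparable (Fx x))
    (hFGH : ∀ G H, G ∈ S → H ∈ S → IsSeparable G → IsSeparable H →
      FGH G H ∈ S ∧ IsSeparable (FGH G H))
    (C : Set X) (k : ℕ) : psiN S Fx FGH Z C k ⊆ {F | F ∈ S ∧ IsSeparable F} := by
  induction k with
  | zero =>
    rintro _ ⟨x, -, rfl⟩
    exact hFx x
  | succ k ih =>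
    rintro F (hF | ⟨G, -, H, -, hG, hH, hGs, hHs, rfl⟩)
    exacts [ih hF, hFGH G H hG hH hGs hHs]

theorem psi_subset (hFx : ∀ x, Fx x ∈ S ∧ IsSeparable (Fx x))
    (hFGH : ∀ G H, G ∈ S → H ∈ S → IsSeparable G → IsSeparable H →
      FGH G H ∈ S ∧ IsSeparable (FGH G H))
    (C : Set X) : psi S Fx FGH Z C ⊆ {F | F ∈ S ∧ IsSeparable F} :=
  Set.iUnion_subset (psiN_subset hFx hFGH C)

theorem mk_psiN_le (hZ : Z.Countable) (C : Set X) (k : ℕ) :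
    #(psiN S Fx FGH Z C k) ≤ max #C ℵ₀ := by
  have hκ : ℵ₀ ≤ max #C ℵ₀ := le_max_right _ _
  induction k with
  | zero =>
    calc #(Fx '' (C ∪ Z)) ≤ #C + #Z := mk_image_le.trans (mk_union_le C Z)
      _ ≤ max #C ℵ₀ := add_le_of_le hκ (le_max_left _ _) ((mk_le_aleph0_iff.2 hZ).trans hκ)
  | succ k ih =>
    refine (mk_union_le _ _).trans (add_le_of_le hκ ih ?_)
    have hpairs : {F | ∃ G ∈ psiN S Fx FGH Z C k, ∃ H ∈ psiN S Fx FGH Z C k,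
        G ∈ S ∧ H ∈ S ∧ IsSeparable G ∧ IsSeparable H ∧ F = FGH G H} ⊆
        Set.image2 FGH (psiN S Fx FGH Z C k) (psiN S Fx FGH Z C k) := by
      rintro _ ⟨G, hG, H, hH, -, -, -, -, rfl⟩
      exact Set.mem_image2_of_mem hG hH
    calc _ ≤ #(psiN S Fx FGH Z C k) * #(psiN S Fx FGH Z C k) :=
          (mk_le_mk_of_subset hpairs).trans mk_image2_le
      _ ≤ max #C ℵ₀ * max #C ℵ₀ := mul_le_mul' ih ih
      _ = max #C ℵ₀ := mul_eq_self hκ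

theorem mk_psi_le (hZ : Z.Countable) (C : Set X) : #(psi S Fx FGH Z C) ≤ max #C ℵ₀ :=
  mk_iUnion_le_of_le (by simp) (le_max_right _ _) (mk_psiN_le hZ C)

theorem psi_directedOn {C : Set X} (hψ : psi S Fx FGH Z C ⊆ {F | F ∈ S ∧ IsSeparable F})
    (hFGH : ∀ G H, G ∈ S → H ∈ S → IsSeparable G → IsSeparable H → G ∪ H ⊆ FGH G H) :
    DirectedOn (· ⊆ ·) (psi S Fx FGH Z C) := by
  rintro G ⟨_, ⟨k, rfl⟩, hGk⟩ H ⟨_, ⟨l, rfl⟩, hHl⟩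
  have hG := monotone_psiN C (le_max_left k l) hGk
  have hH := monotone_psiN C (le_max_right k l) hHl
  obtain ⟨hGS, hGs⟩ := hψ (Set.mem_iUnion_of_mem _ hG)
  obtain ⟨hHS, hHs⟩ := hψ (Set.mem_iUnion_of_mem _ hH)
  refine ⟨FGH G H, Set.mem_iUnion_of_mem (max k l + 1)
    (Or.inr ⟨G, hG, H, hH, hGS, hHS, hGs, hHs, rfl⟩), ?_⟩
  exact Set.union_subset_iff.1 (hFGH G H hGS hHS hGs hHs)

theorem psiN_sUnion_subset {𝒜 : Set (Set X)} (hne : 𝒜.Nonempty) (hdir : DirectedOn (· ⊆ ·) 𝒜)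
    (k : ℕ) : psiN S Fx FGH Z (⋃₀ 𝒜) k ⊆ ⋃ A ∈ 𝒜, psiN S Fx FGH Z A k := by
  induction k with
  | zero =>
    rintro _ ⟨x, ⟨A, hA, hxA⟩ | hxZ, rfl⟩
    · exact Set.mem_biUnion hA (Set.mem_image_of_mem Fx (Or.inl hxA))
    · exact Set.mem_biUnion hne.some_mem (Set.mem_image_of_mem Fx (Or.inr hxZ))
  | succ k ih =>
    rintro F (hF | ⟨G, hG, H, hH, hGH⟩)
    · obtain ⟨A, hA, hFA⟩ := Set.mem_iUnion₂.1 (ih hF)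
      exact Set.mem_biUnion hA (Or.inl hFA)
    · obtain ⟨A₁, hA₁, hGA⟩ := Set.mem_iUnion₂.1 (ih hG)
      obtain ⟨A₂, hA₂, hHA⟩ := Set.mem_iUnion₂.1 (ih hH)
      obtain ⟨A, hA, h₁, h₂⟩ := hdir A₁ hA₁ A₂ hA₂
      exact Set.mem_biUnion hA (Or.inr ⟨G, psiN_mono h₁ k hGA, H, psiN_mono h₂ k hHA, hGH⟩)

theorem psi_sUnion_subset {𝒜 : Set (Set X)} (hne : 𝒜.Nonempty) (hdir : DirectedOn (· ⊆ ·) 𝒜) :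
    psi S Fx FGH Z (⋃₀ 𝒜) ⊆ ⋃ A ∈ 𝒜, psi S Fx FGH Z A := by
  rintro F ⟨_, ⟨k, rfl⟩, hF⟩
  obtain ⟨A, hA, hFA⟩ := Set.mem_iUnion₂.1 (psiN_sUnion_subset hne hdir k hF)
  exact Set.mem_biUnion hA (Set.mem_iUnion_of_mem k hFA)

variable {DF : Set X → Set X}

theorem left_subset_phiCon (C : Set X) : Z ⊆ phiCon S Fx FGH DF Z C :=
  Set.subset_union_left.trans Set.subset_union_left

theorem self_subset_phiCon (C : Set X) : C ⊆ phiCon S Fx FGH DF Z C :=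
  Set.subset_union_right.trans Set.subset_union_left

theorem DF_subset_phiCon {C F : Set X} (hF : F ∈ psi S Fx FGH Z C) (hs : IsSeparable F) :
    DF F ⊆ phiCon S Fx FGH DF Z C :=
  (Set.subset_biUnion_of_mem (u := DF) (Set.mem_sep hF hs)).trans Set.subset_union_right

theorem phiCon_mono {C C' : Set X} (h : C ⊆ C') :
    phiCon S Fx FGH DF Z C ⊆ phiCon S Fx FGH DF Z C' :=
  Set.union_subset (Set.union_subset (left_subset_phiCon C') (h.trans (self_subset_phiCon C')))
    (Set.iUnion₂_subset fun _ hF => DF_subset_phiCon (psi_mono h hF.1) hF.2)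

theorem phiCon_sUnion {𝒜 : Set (Set X)} (hne : 𝒜.Nonempty) (hdir : DirectedOn (· ⊆ ·) 𝒜) :
    phiCon S Fx FGH DF Z (⋃₀ 𝒜) = ⋃ A ∈ 𝒜, phiCon S Fx FGH DF Z A := by
  refine subset_antisymm ?_
    (Set.iUnion₂_subset fun A hA => phiCon_mono (Set.subset_sUnion_of_mem hA))
  rintro x ((hxZ | ⟨A, hA, hxA⟩) | hx)
  · exact Set.mem_biUnion hne.some_mem (left_subset_phiCon _ hxZ)
  · exact Set.mem_biUnion hA (self_subset_phiCon A hxA)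
  · obtain ⟨F, ⟨hF, hs⟩, hxF⟩ := Set.mem_iUnion₂.1 hx
    obtain ⟨A, hA, hFA⟩ := Set.mem_iUnion₂.1 (psi_sUnion_subset hne hdir hF)
    exact Set.mem_biUnion hA (DF_subset_phiCon hFA hs hxF)

theorem mk_phiCon (hZc : Z.Countable) (hZi : Z.Infinite) {C : Set X}
    (hDF : ∀ F ∈ psi S Fx FGH Z C, IsSeparable F → (DF F).Countable) :
    #(phiCon S Fx FGH DF Z C) = max #C ℵ₀ := by
  have hκ : ℵ₀ ≤ max #C ℵ₀ := le_max_right _ _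
  have hdense : #(⋃ F ∈ {F ∈ psi S Fx FGH Z C | IsSeparable F}, DF F) ≤ max #C ℵ₀ := by
    rw [Set.biUnion_eq_iUnion]
    refine mk_iUnion_le_of_le ?_ hκ fun F => (mk_le_aleph0_iff.2 (hDF F.1 F.2.1 F.2.2)).trans hκ
    simpa using (mk_le_mk_of_subset (Set.sep_subset _ _)).trans (mk_psi_le hZc C)
  refine le_antisymm ?_ (max_le (mk_le_mk_of_subset (self_subset_phiCon C)) ?_)
  · refine (mk_union_le _ _).trans (add_le_of_le hκ ((mk_union_le _ _).trans ?_) hdense)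
    exact add_le_of_le hκ ((mk_le_aleph0_iff.2 hZc).trans hκ) (le_max_left _ _)
  · exact aleph0_le_mk_iff.2 (hZi.mono (left_subset_phiCon C)).to_subtype

theorem closure_phiCon {C : Set X} (hψ : psi S Fx FGH Z C ⊆ {F | F ∈ S ∧ IsSeparable F})
    (hFx : ∀ x, x ∈ Fx x) (hDF : ∀ F ∈ S, IsSeparable F → DF F ⊆ F ∧ F ⊆ closure (DF F)) :
    closure (phiCon S Fx FGH DF Z C) = closure (⋃₀ psi S Fx FGH Z C) := by
  have hFx_mem : ∀ x ∈ C ∪ Z, Fx x ∈ psi S Fx FGH Z C :=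
    fun x hx => Set.mem_iUnion_of_mem 0 (Set.mem_image_of_mem Fx hx)
  refine subset_antisymm (closure_mono ?_) (closure_minimal ?_ isClosed_closure)
  · rintro x ((hxZ | hxC) | hx)
    · exact ⟨Fx x, hFx_mem x (Or.inr hxZ), hFx x⟩
    · exact ⟨Fx x, hFx_mem x (Or.inl hxC), hFx x⟩
    · obtain ⟨F, ⟨hF, hs⟩, hxF⟩ := Set.mem_iUnion₂.1 hx
      exact ⟨F, hF, (hDF F (hψ hF).1 hs).1 hxF⟩
  · rintro x ⟨F, hF, hxF⟩
    obtain ⟨hFS, hs⟩ := hψ hF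
    exact closure_mono (DF_subset_phiCon hF hs) ((hDF F hFS hs).2 hxF)

end

/-- Given an exceedingly rich family `S` and choices: `F_x ∈ S` separable containing `x`,
`F_{G,H} ∈ S` separable containing `G ∪ H` for separable `G, H ∈ S`, and countable dense
subsets `D_F ⊆ F` for separable `F ∈ S`, the function `φ` obtained by closing off is
Skolem-like and `{closure (φ C) : C ⊆ X} ⊆ S`. -/
theorem phiCon_skolemLike_and_subset (S : Set (Set X)) (hS : ExceedinglyRich S)
    (Fx : X → Set X) (hFx : ∀ x : X, Fx x ∈ S ∧ x ∈ Fx x ∧ IsSeparable (Fx x))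
    (FGH : Set X → Set X → Set X)
    (hFGH : ∀ G H : Set X, G ∈ S → H ∈ S → IsSeparable G → IsSeparable H →
      FGH G H ∈ S ∧ IsSeparable (FGH G H) ∧ G ∪ H ⊆ FGH G H)
    (DF : Set X → Set X)
    (hDF : ∀ F : Set X, F ∈ S → IsSeparable F →
      DF F ⊆ F ∧ (DF F).Countable ∧ F ⊆ closure (DF F))
    (Z : Set X) (hZc : Z.Countable) (hZi : Z.Infinite) :
    SkolemLike (phiCon S Fx FGH DF Z) ∧
      {F : Set X | ∃ C : Set X, F = closure (phiCon S Fx FGH DF Z C)} ⊆ S := by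
  have hψ : ∀ C, psi S Fx FGH Z C ⊆ {F | F ∈ S ∧ IsSeparable F} :=
    psi_subset (fun x => ⟨(hFx x).1, (hFx x).2.2⟩)
      fun G H hG hH hGs hHs => (hFGH G H hG hH hGs hHs).imp_right And.left
  refine ⟨⟨fun C => ⟨self_subset_phiCon C, mk_phiCon hZc hZi fun F hF hs =>
      (hDF F (hψ C hF).1 hs).2.1⟩, fun _ _ => phiCon_mono, fun _ => phiCon_sUnion⟩, ?_⟩
  rintro _ ⟨C, rfl⟩
  rw [closure_phiCon (hψ C) (fun x => (hFx x).2.1) fun F hF hs => (hDF F hF hs).imp_right And.right]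
  exact hS.2.2 _ (fun F hF => (hψ C hF).1) (psi_nonempty hZi.nonempty C)
    (psi_directedOn (hψ C) fun G H hG hH hGs hHs => (hFGH G H hG hH hGs hHs).2.2)
end

section
/- If X is a topological space and S is an exceedingly rich family of closed subspaces of X, then there exists a subfamily S₀ ⊆ S that is large in the sense of Skolem-like functions. -/
/-!
Every countable set `Y` has a countably infinite superset `Z` with `closure Z ∈ S`: take `F ∈ S`
of density `ℵ₀` containing `Y` and add to `Y` a countable dense subset of `F`. Choosing such a `Z`
for each countable `Y` gives an extension operator `g`. By recursion on finite sets put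
`ψ s = g (s ∪ ⋃_{t ⊂ s} ψ t)`; this makes `ψ` monotone, and `φ C = ⋃_{s ⊆ C finite} ψ s` is
Skolem-like. Since `φ C` is the union of the directed family `ψ s`, whose closures lie in `S`,
condition (R-b) puts `closure (φ C)` in `S`.
-/

open Cardinal

variable {X : Type*} [TopologicalSpace X]

open Set

theorem dens_le_mk (A : Set X) : dens A ≤ #A :=
  csInf_le' ⟨A, subset_rfl, subset_closure, rfl⟩

theorem exists_dense_subset_mk_eq_dens (A : Set X) :
    ∃ D ⊆ A, A ⊆ closure D ∧ #D = dens A :=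
  csInf_mem (s := {c : Cardinal | ∃ D : Set X, D ⊆ A ∧ A ⊆ closure D ∧ #D = c})
    ⟨#A, A, subset_rfl, subset_closure, rfl⟩

section FinitaryExtension

variable {I : Type*} {ψ : Finset I → Set I}

def finitaryExt (ψ : Finset I → Set I) (C : Set I) : Set I :=
  ⋃ s : {s : Finset I // ↑s ⊆ C}, ψ s

theorem subset_finitaryExt_of_subset {s : Finset I} {C : Set I} (hs : ↑s ⊆ C) :
    ψ s ⊆ finitaryExt ψ C :=
  fun _ hx ↦ mem_iUnion.2 ⟨⟨s, hs⟩, hx⟩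

theorem subset_finitaryExt (hψ : ∀ s, ↑s ⊆ ψ s) (C : Set I) : C ⊆ finitaryExt ψ C :=
  fun x hx ↦ subset_finitaryExt_of_subset (s := {x}) (by simpa using hx) (hψ {x} (by simp))

theorem finitaryExt_mono : Monotone (finitaryExt ψ) :=
  fun _ _ h ↦ iUnion_subset fun s ↦ subset_finitaryExt_of_subset (s.2.trans h)

theorem finitaryExt_sUnion {𝒜 : Set (Set I)} (hne : 𝒜.Nonempty) (hdir : DirectedOn (· ⊆ ·) 𝒜) :
    finitaryExt ψ (⋃₀ 𝒜) = ⋃ A ∈ 𝒜, finitaryExt ψ A := by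
  refine (iUnion_subset fun s ↦ ?_).antisymm
    (iUnion₂_subset fun A hA ↦ finitaryExt_mono (subset_sUnion_of_mem hA))
  obtain ⟨A, hA, hsA⟩ := hdir.exists_mem_subset_of_finset_subset_biUnion (f := id) hne
    (s.2.trans sUnion_eq_biUnion.subset)
  exact (subset_finitaryExt_of_subset hsA).trans (subset_biUnion_of_mem hA)

theorem mk_finset_subset_le (C : Set I) : #{s : Finset I // ↑s ⊆ C} ≤ max ℵ₀ #C := by
  classical
  calc #{s : Finset I // ↑s ⊆ C}
      = #(Finset C) := (mk_congr (Equiv.finsetSubtypeComm (· ∈ C))).symm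
    _ ≤ #(List C) := mk_le_of_surjective List.toFinset_surjective
    _ ≤ max ℵ₀ #C := mk_list_le_max _

theorem mk_finitaryExt (hψ : ∀ s, ↑s ⊆ ψ s) (hcount : ∀ s, (ψ s).Countable)
    (hinf : (ψ ∅).Infinite) (C : Set I) : #(finitaryExt ψ C) = max #C ℵ₀ := by
  refine le_antisymm ?_ (max_le (mk_le_mk_of_subset (subset_finitaryExt hψ C)) ?_)
  · calc #(finitaryExt ψ C)
        ≤ #{s : Finset I // ↑s ⊆ C} * ⨆ s : {s : Finset I // ↑s ⊆ C}, #(ψ s) := mk_iUnion_le _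
      _ ≤ max ℵ₀ #C * ℵ₀ :=
        mul_le_mul' (mk_finset_subset_le C) (ciSup_le' fun s ↦ (hcount s).le_aleph0)
      _ ≤ max (max (max ℵ₀ #C) ℵ₀) ℵ₀ := mul_le_max _ _
      _ = max #C ℵ₀ := by simp [max_comm]
  · rw [← infinite_iff, infinite_coe_iff]
    exact hinf.mono (subset_finitaryExt_of_subset (s := ∅) (by simp))

theorem skolemLike_finitaryExt (hψ : ∀ s, ↑s ⊆ ψ s) (hcount : ∀ s, (ψ s).Countable)
    (hinf : (ψ ∅).Infinite) : SkolemLike (finitaryExt ψ) :=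
  ⟨fun A ↦ ⟨subset_finitaryExt hψ A, mk_finitaryExt hψ hcount hinf A⟩,
    fun _ _ h ↦ finitaryExt_mono h, fun _ hne hdir ↦ finitaryExt_sUnion hne hdir⟩

end FinitaryExtension

section FinsetHull

variable {I : Type*} (g : Set I → Set I)

def finsetHull (s : Finset I) : Set I :=
  g (↑s ∪ ⋃ t ∈ {t | t ⊂ s}, finsetHull t)
termination_by s.card
decreasing_by exact Finset.card_lt_card ‹_›

theorem finsetHull_eq (s : Finset I) :
    finsetHull g s = g (↑s ∪ ⋃ t ∈ {t | t ⊂ s}, finsetHull g t) := by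
  rw [finsetHull]

theorem Finset.countable_setOf_ssubset (s : Finset I) : {t | t ⊂ s}.Countable :=
  s.powerset.countable_toSet.mono fun _ ht ↦ Finset.mem_powerset.2 ht.subset

variable {g}

theorem countable_finsetHull_arg (hcount : ∀ Y, Y.Countable → (g Y).Countable) (s : Finset I) :
    (↑s ∪ ⋃ t ∈ {t | t ⊂ s}, finsetHull g t).Countable := by
  induction s using Finset.strongInduction with
  | H s ih =>
    exact s.countable_toSet.union <| s.countable_setOf_ssubset.biUnion fun t ht ↦
      finsetHull_eq g t ▸ hcount _ (ih t ht)

theorem finsetHull_arg_subset (hsub : ∀ Y, Y.Countable → Y ⊆ g Y)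
    (hcount : ∀ Y, Y.Countable → (g Y).Countable) (s : Finset I) :
    ↑s ∪ ⋃ t ∈ {t | t ⊂ s}, finsetHull g t ⊆ finsetHull g s :=
  finsetHull_eq g s ▸ hsub _ (countable_finsetHull_arg hcount s)

theorem finsetHull_of_forall_countable {P : Set I → Prop}
    (hcount : ∀ Y, Y.Countable → (g Y).Countable) (hP : ∀ Y, Y.Countable → P (g Y))
    (s : Finset I) : P (finsetHull g s) :=
  finsetHull_eq g s ▸ hP _ (countable_finsetHull_arg hcount s)

theorem subset_finsetHull (hsub : ∀ Y, Y.Countable → Y ⊆ g Y)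
    (hcount : ∀ Y, Y.Countable → (g Y).Countable) (s : Finset I) : ↑s ⊆ finsetHull g s :=
  subset_union_left.trans (finsetHull_arg_subset hsub hcount s)

theorem finsetHull_mono (hsub : ∀ Y, Y.Countable → Y ⊆ g Y)
    (hcount : ∀ Y, Y.Countable → (g Y).Countable) : Monotone (finsetHull g) := by
  intro s t hst
  obtain rfl | hssub := eq_or_ssubset_of_subset hst
  · rfl
  · exact (subset_biUnion_of_mem (u := finsetHull g) hssub).trans
      (subset_union_right.trans (finsetHull_arg_subset hsub hcount t))

end FinsetHull

namespace ExceedinglyRich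

variable {S : Set (Set X)}

theorem exists_countable_infinite_superset (hS : ExceedinglyRich S) {Y : Set X}
    (hY : Y.Countable) : ∃ Z, Y ⊆ Z ∧ Z.Countable ∧ Z.Infinite ∧ closure Z ∈ S := by
  obtain ⟨F, hFS, hYF, hdens⟩ := hS.2.1 Y
  have hdensF : dens F = ℵ₀ := by
    rw [hdens, max_eq_right ((dens_le_mk Y).trans hY.le_aleph0)]
  obtain ⟨D, hDF, hFD, hD⟩ := exists_dense_subset_mk_eq_dens F
  rw [hdensF] at hD
  have hclosure : closure (Y ∪ D) = F :=
    ((hS.1 F hFS).closure_subset_iff.2 (union_subset hYF hDF)).antisymm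
      (hFD.trans (closure_mono subset_union_right))
  refine ⟨Y ∪ D, subset_union_left, hY.union (le_aleph0_iff_set_countable.1 hD.le),
    Infinite.mono subset_union_right ?_, hclosure ▸ hFS⟩
  rw [← infinite_coe_iff, infinite_iff, hD]

theorem closure_iUnion_mem (hS : ExceedinglyRich S) {ι : Type*} [Nonempty ι] {f : ι → Set X}
    (hf : Directed (· ⊆ ·) f) (hfS : ∀ i, closure (f i) ∈ S) : closure (⋃ i, f i) ∈ S := by
  have hdir : DirectedOn (· ⊆ ·) (range fun i ↦ closure (f i)) :=
    directedOn_range.2 (hf.mono_comp _ (g := closure) fun _ _ ↦ closure_mono)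
  have hclosure : closure (⋃ i, closure (f i)) = closure (⋃ i, f i) :=
    (closure_minimal (iUnion_subset fun i ↦ closure_mono (subset_iUnion f i))
      isClosed_closure).antisymm (closure_mono (iUnion_mono fun _ ↦ subset_closure))
  simpa only [sUnion_range, hclosure] using
    hS.2.2 _ (range_subset_iff.2 hfS) (range_nonempty _) hdir

theorem closure_finitaryExt_mem (hS : ExceedinglyRich S) {ψ : Finset X → Set X}
    (hψ : Monotone ψ) (hψS : ∀ s, closure (ψ s) ∈ S) (C : Set X) :
    closure (finitaryExt ψ C) ∈ S := by
  classical
  have : Nonempty {s : Finset X // ↑s ⊆ C} := ⟨⟨∅, by simp⟩⟩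
  refine hS.closure_iUnion_mem (fun s t ↦ ?_) fun s ↦ hψS s
  exact ⟨⟨s.1 ∪ t.1, by simpa using union_subset s.2 t.2⟩, hψ Finset.subset_union_left,
    hψ Finset.subset_union_right⟩

end ExceedinglyRich

/-- If `S` is exceedingly rich then some subfamily `S₀ ⊆ S` is large in the sense of
Skolem-like functions, i.e. `S₀ = {closure (φ C) : C ⊆ X}` for a Skolem-like `φ`. -/
theorem exceedinglyRich_to_skolemLike (S : Set (Set X)) (hS : ExceedinglyRich S) :
    ∃ S₀ : Set (Set X), S₀ ⊆ S ∧ ∃ φ : Set X → Set X, SkolemLike φ ∧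
      S₀ = {F : Set X | ∃ C : Set X, F = closure (φ C)} := by
  choose! g hsub hcount hinf hS_mem using
    fun (Y : Set X) (hY : Y.Countable) ↦ hS.exists_countable_infinite_superset hY
  have hφ : SkolemLike (finitaryExt (finsetHull g)) :=
    skolemLike_finitaryExt (subset_finsetHull hsub hcount)
      (finsetHull_of_forall_countable hcount hcount)
      (finsetHull_of_forall_countable hcount hinf ∅)
  refine ⟨_, ?_, _, hφ, rfl⟩
  rintro _ ⟨C, rfl⟩
  exact hS.closure_finitaryExt_mem (finsetHull_mono hsub hcount)
    (finsetHull_of_forall_countable (P := fun Y ↦ closure Y ∈ S) hcount hS_mem) C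
end

section
/- Let X be a Banach space that is a Gurariĭ space, and let Y ⊆ X be a closed subspace that is an almost isometric ideal in X. Then Y is also a Gurariĭ space. -/
/-- A Banach space `X` is a Gurariĭ space if for every `ε > 0`, every finite-dimensional
normed space `F`, every subspace `E ⊆ F` and every linear isometric embedding `T : E → X`,
there is a linear extension `S : F → X` with `(1+ε)⁻¹‖x‖ ≤ ‖Sx‖ ≤ (1+ε)‖x‖` on `F`. -/
def IsGurarii (X : Type*) [NormedAddCommGroup X] [NormedSpace ℝ X] : Prop :=
  ∀ (F : Type) (_ : NormedAddCommGroup F) (_ : NormedSpace ℝ F) (_ : FiniteDimensional ℝ F)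
    (E : Submodule ℝ F) (T : E →L[ℝ] X), (∀ x : E, ‖T x‖ = ‖x‖) →
    ∀ ε : ℝ, 0 < ε → ∃ S : F →L[ℝ] X, (∀ x : E, S x = T x) ∧
      ∀ x : F, (1 + ε)⁻¹ * ‖x‖ ≤ ‖S x‖ ∧ ‖S x‖ ≤ (1 + ε) * ‖x‖

/-- Almost isometric ideal. -/
def AiIdeal {X : Type*} [NormedAddCommGroup X] [NormedSpace ℝ X] (Y : Submodule ℝ X) : Prop :=
  ∀ E : Submodule ℝ X, FiniteDimensional ℝ E → ∀ ε : ℝ, 0 < ε →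
    ∃ T : E →L[ℝ] X, (∀ x : E, T x ∈ Y) ∧ (∀ x : E, (x : X) ∈ Y → T x = x) ∧
      ∀ x : E, (1 + ε)⁻¹ * ‖x‖ ≤ ‖T x‖ ∧ ‖T x‖ ≤ (1 + ε) * ‖x‖

/-!
Compose the given embedding `E → Y` with the inclusion `Y → X`, extend it to `F` using that `X`
is Gurariĭ, and pull the extension back into `Y` by an almost isometric ideal operator on its
finite-dimensional range. That operator fixes the image of `E`, which already lies in `Y`, and
the two distortions multiply, so it suffices to run both steps with `(1 + δ)² ≤ 1 + ε`.
-/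

section AlmostIsometry

variable {E F G : Type*} [SeminormedAddCommGroup E] [SeminormedAddCommGroup F]
  [SeminormedAddCommGroup G]

def IsAlmostIsometry (f : E → F) (ε : ℝ) : Prop :=
  ∀ x, (1 + ε)⁻¹ * ‖x‖ ≤ ‖f x‖ ∧ ‖f x‖ ≤ (1 + ε) * ‖x‖

theorem IsAlmostIsometry.comp {g : F → G} {f : E → F} {δ η ε : ℝ} (hg : IsAlmostIsometry g η)
    (hf : IsAlmostIsometry f δ) (hδ : 0 ≤ δ) (hη : 0 ≤ η) (hδη : (1 + δ) * (1 + η) ≤ 1 + ε) :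
    IsAlmostIsometry (g ∘ f) ε := by
  intro x
  obtain ⟨hf₁, hf₂⟩ := hf x
  obtain ⟨hg₁, hg₂⟩ := hg (f x)
  have hx := norm_nonneg x
  constructor
  · calc (1 + ε)⁻¹ * ‖x‖ ≤ (1 + η)⁻¹ * ((1 + δ)⁻¹ * ‖x‖) := by
          rw [← mul_assoc, ← mul_inv, mul_comm (1 + η)]
          gcongr
      _ ≤ (1 + η)⁻¹ * ‖f x‖ := by gcongr
      _ ≤ ‖g (f x)‖ := hg₁
  · calc ‖g (f x)‖ ≤ (1 + η) * ‖f x‖ := hg₂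
      _ ≤ (1 + η) * ((1 + δ) * ‖x‖) := by gcongr
      _ ≤ (1 + ε) * ‖x‖ := by rw [← mul_assoc, mul_comm (1 + η)]; gcongr

end AlmostIsometry

theorem exists_pos_one_add_mul_self_le {ε : ℝ} (hε : 0 < ε) :
    ∃ δ > 0, (1 + δ) * (1 + δ) ≤ 1 + ε :=
  ⟨min (ε / 3) 1, by positivity, by
    have h₀ : 0 < min (ε / 3) 1 := by positivity
    have h₁ := min_le_left (ε / 3) 1
    have h₂ := min_le_right (ε / 3) 1
    nlinarith⟩

theorem AiIdeal.exists_almostIsometry {X : Type*} [NormedAddCommGroup X] [NormedSpace ℝ X]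
    {Y : Submodule ℝ X} (hY : AiIdeal Y) (V : Submodule ℝ X) [FiniteDimensional ℝ V] {ε : ℝ}
    (hε : 0 < ε) :
    ∃ P : V →L[ℝ] Y, (∀ x : V, (x : X) ∈ Y → (P x : X) = x) ∧ IsAlmostIsometry P ε := by
  obtain ⟨P, hPY, hPfix, hP⟩ := hY V inferInstance ε hε
  exact ⟨P.codRestrict Y hPY, hPfix, hP⟩

theorem aiIdeal_isGurarii_general {X : Type*} [NormedAddCommGroup X] [NormedSpace ℝ X]
    (hX : IsGurarii X) (Y : Submodule ℝ X) (hY : AiIdeal Y) : IsGurarii ↥Y := by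
  intro F _ _ hF E T hT ε hε
  obtain ⟨δ, hδ, hδε⟩ := exists_pos_one_add_mul_self_le hε
  obtain ⟨S, hST, hS⟩ := hX F _ _ hF E (Y.subtypeL.comp T) hT δ hδ
  let V := LinearMap.range (S : F →ₗ[ℝ] X)
  obtain ⟨P, hPfix, hP⟩ := hY.exists_almostIsometry V hδ
  let SV : F →L[ℝ] V := S.codRestrict V (LinearMap.mem_range_self _)
  refine ⟨P.comp SV, fun x => Subtype.ext ?_, hP.comp hS hδ.le hδ.le hδε⟩
  have hSx : (SV x : X) = T x := hST x
  simpa [hSx] using hPfix (SV x) (hSx ▸ (T x).2)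

/-- An almost isometric ideal in a Gurariĭ space is a Gurariĭ space. -/
theorem aiIdeal_isGurarii {X : Type*} [NormedAddCommGroup X] [NormedSpace ℝ X]
    [CompleteSpace X] (hX : IsGurarii X) (Y : Submodule ℝ X) (hYc : IsClosed (Y : Set X))
    (hY : AiIdeal Y) : IsGurarii ↥Y :=
  aiIdeal_isGurarii_general hX Y hY
end

section
/- Let X be a Banach space that fails the Daugavet property, witnessed by y ∈ S_X, x* ∈ S_{X*}, and ε > 0 such that for every x ∈ S_X either x*(x) < 1 − ε or ‖x + y‖ < 2 − ε. Let D ⊆ B_X be a countable set with sup_{x∈D} |x*(x)| = 1. Then every closed subspace Y ⊆ X containing {y} ∪ D fails the Daugavet property. -/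
/-- The Daugavet property, via the Kadets–Shvidkoy–Sirotkin–Werner characterization. -/
def HasDaugavetProperty (Z : Type*) [NormedAddCommGroup Z] [NormedSpace ℝ Z] : Prop :=
  ∀ z : Z, ‖z‖ = 1 → ∀ g : Z →L[ℝ] ℝ, ‖g‖ = 1 → ∀ ε : ℝ, 0 < ε →
    ∃ x : Z, ‖x‖ = 1 ∧ 1 - ε ≤ g x ∧ 2 - ε ≤ ‖x + z‖

theorem not_hasDaugavetProperty_of_forall {Z : Type*} [NormedAddCommGroup Z] [NormedSpace ℝ Z]
    (z : Z) (hz : ‖z‖ = 1) (g : Z →L[ℝ] ℝ) (hg : ‖g‖ = 1) (ε : ℝ) (hε : 0 < ε)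
    (hfail : ∀ x : Z, ‖x‖ = 1 → g x < 1 - ε ∨ ‖x + z‖ < 2 - ε) :
    ¬ HasDaugavetProperty Z := by
  intro h
  obtain ⟨x, hx, hgx, hxz⟩ := h z hz g hg ε hε
  rcases hfail x hx with hlt | hlt <;> linarith

theorem ContinuousLinearMap.one_le_opNorm_of_forall_lt_exists
    {𝕜 E F : Type*} [NontriviallyNormedField 𝕜] [SeminormedAddCommGroup E] [NormedSpace 𝕜 E]
    [SeminormedAddCommGroup F] [NormedSpace 𝕜 F] (f : E →L[𝕜] F) (D : Set E)
    (hD : ∀ x ∈ D, ‖x‖ ≤ 1) (hsup : ∀ c : ℝ, c < 1 → ∃ x ∈ D, c < ‖f x‖) :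
    1 ≤ ‖f‖ := by
  by_contra! hlt
  obtain ⟨x, hxD, hx⟩ := hsup ‖f‖ hlt
  have : ‖f x‖ ≤ ‖f‖ := by
    simpa using f.le_opNorm x |>.trans (mul_le_mul_of_nonneg_left (hD x hxD) (norm_nonneg f))
  linarith

theorem ContinuousLinearMap.norm_comp_subtypeL_eq_one {X : Type*} [NormedAddCommGroup X]
    [NormedSpace ℝ X] (f : X →L[ℝ] ℝ) (hf : ‖f‖ ≤ 1) (Y : Submodule ℝ X) (D : Set X)
    (hDball : ∀ x ∈ D, ‖x‖ ≤ 1) (hDsup : ∀ c : ℝ, c < 1 → ∃ x ∈ D, c < |f x|)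
    (hDY : D ⊆ (Y : Set X)) :
    ‖f.comp Y.subtypeL‖ = 1 := by
  refine le_antisymm ((f.opNorm_comp_le _).trans ?_) ?_
  · exact mul_le_one₀ hf (norm_nonneg _) (Submodule.norm_subtypeL_le Y)
  · refine (f.comp Y.subtypeL).one_le_opNorm_of_forall_lt_exists (Subtype.val ⁻¹' D)
      (fun x hx => hDball x hx) fun c hc => ?_
    obtain ⟨x, hxD, hx⟩ := hDsup c hc
    exact ⟨⟨x, hDY hxD⟩, hxD, hx⟩

theorem subspace_fails_daugavet_general {X : Type*} [NormedAddCommGroup X] [NormedSpace ℝ X]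
    (y : X) (hy : ‖y‖ = 1) (f : X →L[ℝ] ℝ) (hf : ‖f‖ = 1) (ε : ℝ) (hε : 0 < ε)
    (hfail : ∀ x : X, ‖x‖ = 1 → f x < 1 - ε ∨ ‖x + y‖ < 2 - ε)
    (D : Set X) (hDball : ∀ x ∈ D, ‖x‖ ≤ 1)
    (hDsup : ∀ c : ℝ, c < 1 → ∃ x ∈ D, c < |f x|)
    (Y : Submodule ℝ X) (hyY : y ∈ Y)
    (hDY : D ⊆ (Y : Set X)) :
    ¬ HasDaugavetProperty ↥Y :=
  not_hasDaugavetProperty_of_forall ⟨y, hyY⟩ hy (f.comp Y.subtypeL)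
    (f.norm_comp_subtypeL_eq_one hf.le Y D hDball hDsup hDY) ε hε fun x hx => hfail x hx

/-- If `X` fails the Daugavet property, witnessed by `y ∈ S_X`, `x* ∈ S_{X*}` and `ε > 0`,
and `D ⊆ B_X` is countable with `sup_{x ∈ D} |x*(x)| = 1`, then every closed subspace `Y`
containing `{y} ∪ D` fails the Daugavet property. -/
theorem subspace_fails_daugavet {X : Type*} [NormedAddCommGroup X] [NormedSpace ℝ X]
    [CompleteSpace X]
    (y : X) (hy : ‖y‖ = 1) (f : X →L[ℝ] ℝ) (hf : ‖f‖ = 1) (ε : ℝ) (hε : 0 < ε)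
    (hfail : ∀ x : X, ‖x‖ = 1 → f x < 1 - ε ∨ ‖x + y‖ < 2 - ε)
    (D : Set X) (hDc : D.Countable) (hDball : ∀ x ∈ D, ‖x‖ ≤ 1)
    (hDsup : ∀ c : ℝ, c < 1 → ∃ x ∈ D, c < |f x|)
    (Y : Submodule ℝ X) (hYc : IsClosed (Y : Set X)) (hyY : y ∈ Y)
    (hDY : D ⊆ (Y : Set X)) :
    ¬ HasDaugavetProperty ↥Y :=
  subspace_fails_daugavet_general y hy f hf ε hε hfail D hDball hDsup Y hyY hDY
end

section
/- Let X be a Banach space with the Daugavet property and Y ⊆ X an almost isometric ideal in X. Then Y has the Daugavet property, using the characterization: for every y ∈ S_Y, y* ∈ S_{Y*}, and ε > 0 there exists x ∈ S_Y with y*(x) ≥ 1 − ε and ‖x + y‖ ≥ 2 − ε. -/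
open Filter Topology Metric Submodule

theorem hasDaugavetProperty_of_forall_exists_approx {Z : Type*} [NormedAddCommGroup Z]
    [NormedSpace ℝ Z]
    (h : ∀ z : Z, ‖z‖ = 1 → ∀ g : Z →L[ℝ] ℝ, ‖g‖ = 1 → ∀ ε : ℝ, 0 < ε →
      ∃ x : Z, |‖x‖ - 1| ≤ ε ∧ 1 - ε ≤ g x ∧ 2 - ε ≤ ‖x + z‖) :
    HasDaugavetProperty Z := by
  intro z hz g hg ε hε
  set δ := min (ε / 2) (1 / 2)
  obtain ⟨x, hx, hgx, hxz⟩ := h z hz g hg δ (by positivity)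
  have hδε : δ ≤ ε / 2 := min_le_left _ _
  have hx0 : x ≠ 0 := by
    rintro rfl
    rw [norm_zero, zero_sub, abs_neg, abs_one] at hx
    linarith [min_le_right (ε / 2) (1 / 2)]
  have hx' : ‖‖x‖⁻¹ • x‖ = 1 := norm_smul_inv_norm hx0
  have hdist : ‖x - ‖x‖⁻¹ • x‖ ≤ δ := by
    have : x - ‖x‖⁻¹ • x = (‖x‖ - 1) • ‖x‖⁻¹ • x := by
      rw [sub_smul, smul_smul, mul_inv_cancel₀ (norm_ne_zero_iff.2 hx0), one_smul, one_smul]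
    rwa [this, norm_smul, hx', mul_one, Real.norm_eq_abs]
  refine ⟨‖x‖⁻¹ • x, hx', ?_, ?_⟩
  · have : g x - g (‖x‖⁻¹ • x) ≤ δ := calc
      g x - g (‖x‖⁻¹ • x) = g (x - ‖x‖⁻¹ • x) := (map_sub g _ _).symm
      _ ≤ ‖g‖ * ‖x - ‖x‖⁻¹ • x‖ := (le_abs_self _).trans (g.le_opNorm _)
      _ ≤ δ := by rwa [hg, one_mul]
    linarith
  · have := norm_sub_norm_le (x + z) (‖x‖⁻¹ • x + z)
    rw [add_sub_add_right_eq_sub] at this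
    linarith

section WeakStar

variable {𝕜 X : Type*} [NontriviallyNormedField 𝕜] [NormedAddCommGroup X] [NormedSpace 𝕜 X]

theorem StrongDual.exists_tendsto_apply_of_norm_le [ProperSpace 𝕜] {ι : Type*}
    (U : Ultrafilter ι) (f : ι → StrongDual 𝕜 X) {C : ℝ} (hf : ∀ i, ‖f i‖ ≤ C) :
    ∃ G : StrongDual 𝕜 X, ∀ x, Tendsto (fun i => f i x) U (𝓝 (G x)) := by
  obtain ⟨G, -, hG⟩ := (WeakDual.isCompact_closedBall (0 : StrongDual 𝕜 X) C).ultrafilter_le_nhds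
    (U.map (StrongDual.toWeakDual ∘ f))
    (le_principal_iff.2 <| Ultrafilter.mem_map.2 <| univ_mem' fun i => by simpa using hf i)
  exact ⟨WeakDual.toStrongDual G, fun x => ((WeakDual.eval_continuous x).tendsto G).comp hG⟩

theorem StrongDual.norm_le_of_tendsto_apply {ι : Type*} {l : Filter ι} [l.NeBot]
    {f : ι → StrongDual 𝕜 X} {G : StrongDual 𝕜 X} {c : ι → ℝ} {C : ℝ}
    (hG : ∀ x, Tendsto (fun i => f i x) l (𝓝 (G x))) (hf : ∀ᶠ i in l, ‖f i‖ ≤ c i)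
    (hc : Tendsto c l (𝓝 C)) (hC : 0 ≤ C) : ‖G‖ ≤ C :=
  G.opNorm_le_bound hC fun x => le_of_tendsto_of_tendsto (hG x).norm (hc.mul_const ‖x‖)
    (hf.mono fun _ hi => (f _).le_of_opNorm_le hi x)

end WeakStar

section AlmostIsometricIdeal

variable {X : Type*} [NormedAddCommGroup X] [NormedSpace ℝ X] {Y E F : Submodule ℝ X} {ε : ℝ}

structure IsAlmostIsometryFixing (ε : ℝ) (T : E →L[ℝ] Y) : Prop where
  apply_of_mem : ∀ x : E, (x : X) ∈ Y → (T x : X) = x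
  le_norm : ∀ x : E, (1 + ε)⁻¹ * ‖x‖ ≤ ‖T x‖
  norm_le : ∀ x : E, ‖T x‖ ≤ (1 + ε) * ‖x‖

namespace IsAlmostIsometryFixing

variable {T : E →L[ℝ] Y}

theorem mono (hT : IsAlmostIsometryFixing ε T) (hε : 0 ≤ ε) {ε' : ℝ} (h : ε ≤ ε') :
    IsAlmostIsometryFixing ε' T where
  apply_of_mem := hT.apply_of_mem
  le_norm x := (hT.le_norm x).trans' <|
    mul_le_mul_of_nonneg_right (inv_anti₀ (by linarith) (by linarith)) (norm_nonneg x)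
  norm_le x := (hT.norm_le x).trans <| mul_le_mul_of_nonneg_right (by linarith) (norm_nonneg x)

theorem comp_inclusion (hT : IsAlmostIsometryFixing ε T) (h : F ≤ E) :
    IsAlmostIsometryFixing ε (T.comp (F.subtypeL.codRestrict E fun x => h x.2)) where
  apply_of_mem x := hT.apply_of_mem ⟨x, h x.2⟩
  le_norm x := hT.le_norm ⟨x, h x.2⟩
  norm_le x := hT.norm_le ⟨x, h x.2⟩

theorem abs_norm_sub_norm_le (hT : IsAlmostIsometryFixing ε T) (hε : 0 ≤ ε) (x : E) :
    |‖T x‖ - ‖x‖| ≤ ε * ‖x‖ := by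
  have hinv : 1 - ε ≤ (1 + ε)⁻¹ := by
    rw [← one_div, le_div_iff₀ (by linarith)]
    nlinarith
  have := hT.le_norm x
  have := hT.norm_le x
  rw [abs_le]
  constructor <;> nlinarith [norm_nonneg x]

end IsAlmostIsometryFixing

theorem AiIdeal.exists_isAlmostIsometryFixing (hY : AiIdeal Y) (E : Submodule ℝ X)
    [FiniteDimensional ℝ E] (hε : 0 < ε) : ∃ T : E →L[ℝ] Y, IsAlmostIsometryFixing ε T := by
  obtain ⟨T, hTY, hTfix, hTnorm⟩ := hY E inferInstance ε hε
  exact ⟨T.codRestrict Y hTY, ⟨hTfix, fun x => (hTnorm x).1, fun x => (hTnorm x).2⟩⟩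

theorem AiIdeal.exists_extension (hY : AiIdeal Y) (g : StrongDual ℝ Y) :
    ∃ G : StrongDual ℝ X, ‖G‖ = ‖g‖ ∧ (∀ y : Y, G y = g y) ∧
      ∀ (s : Finset X) (δ : ℝ), 0 < δ → ∃ T : span ℝ (s : Set X) →L[ℝ] Y,
        IsAlmostIsometryFixing δ T ∧
          ∀ x : span ℝ (s : Set X), (x : X) ∈ s → |g (T x) - G x| < δ := by
  classical
  choose T hT using fun i : Finset X × ℕ =>
    hY.exists_isAlmostIsometryFixing (span ℝ (i.1 : Set X)) (ε := 1 / (i.2 + 1)) (by positivity)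
  choose Φ hΦg hΦnorm using fun i => exists_extension_norm_eq _ (g.comp (T i))
  have hΦle (i : Finset X × ℕ) : ‖Φ i‖ ≤ ‖g‖ * (1 + 1 / (i.2 + 1)) := by
    rw [hΦnorm]
    refine (g.comp (T i)).opNorm_le_bound (by positivity) fun x => ?_
    calc ‖g (T i x)‖ ≤ ‖g‖ * ‖T i x‖ := g.le_opNorm _
      _ ≤ ‖g‖ * ((1 + 1 / (i.2 + 1)) * ‖x‖) := by gcongr; exact (hT i).norm_le x
      _ = _ := (mul_assoc ..).symm
  set U := Ultrafilter.of (atTop : Filter (Finset X × ℕ))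
  obtain ⟨G, hG⟩ := StrongDual.exists_tendsto_apply_of_norm_le U Φ (C := ‖g‖ * (1 + 1)) fun i =>
    (hΦle i).trans <| by gcongr; exact div_le_one_of_le₀ (by simp) (by positivity)
  have hU_sub (s : Finset X) : ∀ᶠ i : Finset X × ℕ in U, s ≤ i.1 :=
    Ultrafilter.of_le _ <| (eventually_ge_atTop (s, 0)).mono fun _ h => (Prod.mk_le_mk.1 h).1
  have hU_dist : Tendsto (fun i : Finset X × ℕ => 1 / ((i.2 : ℝ) + 1)) U (𝓝 0) :=
    (tendsto_one_div_add_atTop_nhds_zero_nat.comp tendsto_snd).mono_left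
      ((Ultrafilter.of_le _).trans prod_atTop_atTop_eq.ge)
  have hGg (y : Y) : G y = g y := by
    refine tendsto_nhds_unique (hG y) (tendsto_const_nhds.congr' ?_)
    filter_upwards [hU_sub {(y : X)}] with i hi
    have hy : (y : X) ∈ span ℝ (i.1 : Set X) := subset_span (hi (Finset.mem_singleton_self _))
    rw [hΦg i ⟨y, hy⟩]
    exact congr_arg g (Subtype.ext ((hT i).apply_of_mem ⟨y, hy⟩ y.2)).symm
  have hGle : ‖G‖ ≤ ‖g‖ := StrongDual.norm_le_of_tendsto_apply hG (.of_forall hΦle)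
    (by simpa using (hU_dist.const_add 1).const_mul ‖g‖) (norm_nonneg g)
  have hgle : ‖g‖ ≤ ‖G‖ := g.opNorm_le_bound (norm_nonneg G) fun y => hGg y ▸ G.le_opNorm y
  refine ⟨G, le_antisymm hGle hgle, hGg, fun s δ hδ => ?_⟩
  obtain ⟨i, hsi, hεi, hclose⟩ := ((hU_sub s).and ((hU_dist.eventually (gt_mem_nhds hδ)).and
    ((eventually_all_finset s).2 fun x _ => Metric.tendsto_nhds.1 (hG x) δ hδ))).exists
  have hsub : span ℝ (s : Set X) ≤ span ℝ (i.1 : Set X) := span_mono (by exact_mod_cast hsi)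
  refine ⟨(T i).comp ((span ℝ (s : Set X)).subtypeL.codRestrict _ fun x => hsub x.2),
    ((hT i).comp_inclusion hsub).mono (by positivity) hεi.le, fun x hx => ?_⟩
  rw [← Real.dist_eq]
  exact hΦg i ⟨x, hsub x.2⟩ ▸ hclose x hx

end AlmostIsometricIdeal

theorem aiIdeal_hasDaugavet_general {X : Type*} [NormedAddCommGroup X] [NormedSpace ℝ X]
    (hX : HasDaugavetProperty X) (Y : Submodule ℝ X) (hY : AiIdeal Y) :
    HasDaugavetProperty ↥Y := by
  classical
  refine hasDaugavetProperty_of_forall_exists_approx fun y hy g hg ε hε => ?_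
  obtain ⟨G, hGg, -, hG⟩ := hY.exists_extension g
  obtain ⟨w, hw, hGw, hwy⟩ := hX y hy G (hGg.trans hg) (ε / 3) (by positivity)
  obtain ⟨T, hT, hTG⟩ := hG {w, (y : X)} (ε / 3) (by positivity)
  set w' : span ℝ (({w, (y : X)} : Finset X) : Set X) := ⟨w, subset_span (by simp)⟩
  set y' : span ℝ (({w, (y : X)} : Finset X) : Set X) := ⟨y, subset_span (by simp)⟩
  have hTy : T y' = y := Subtype.ext (hT.apply_of_mem y' y.2)
  have hTw : |‖T w'‖ - 1| ≤ ε / 3 * 1 := hw ▸ hT.abs_norm_sub_norm_le (by positivity) w'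
  have hTwy : |‖T w' + y‖ - ‖w + y‖| ≤ ε / 3 * ‖w + y‖ := by
    have := hT.abs_norm_sub_norm_le (by positivity) (w' + y')
    rwa [map_add, hTy] at this
  have hwy2 : ‖w + y‖ ≤ 2 := (norm_add_le _ _).trans_eq (by rw [hw, norm_coe, hy]; norm_num)
  refine ⟨T w', by linarith, ?_, ?_⟩
  · linarith [(abs_lt.1 (hTG w' (by simp [w']))).1]
  · nlinarith [(abs_le.1 hTwy).1, mul_nonneg hε.le (sub_nonneg.2 hwy2)]

/-- An almost isometric ideal in a space with the Daugavet property has the Daugavet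
property. -/
theorem aiIdeal_hasDaugavet {X : Type*} [NormedAddCommGroup X] [NormedSpace ℝ X]
    [CompleteSpace X] (hX : HasDaugavetProperty X) (Y : Submodule ℝ X)
    (hYc : IsClosed (Y : Set X)) (hY : AiIdeal Y) :
    HasDaugavetProperty ↥Y :=
  aiIdeal_hasDaugavet_general hX Y hY
end

section
/- Let X be a Banach space, E ⊆ X a finite-dimensional subspace, Y ⊆ X a closed subspace, δ ∈ (0,1), and T: E → Y a bounded linear map with ‖T‖ ≤ 1 + δ and ‖(Id − T)|_{E∩Y}‖ ≤ δ', where δ' ≤ δ/(dim E) suitably. Let P: E → E be a projection onto E ∩ Y with ‖P‖ ≤ dim E, and define S = P + T(Id − P): E → Y. Then Sx = x for all x ∈ E ∩ Y, and ‖Sx − Tx‖ ≤ δ'·(dim E)·‖x‖ for all x ∈ E; consequently, if T is a (1+δ)-isomorphic embedding and δ'·dim E ≤ ε/2 with δ ≤ min{ε/2, (ε/2)·(1−ε)/(1+ε)} and ε < 1, then S is a (1+ε)-isomorphic embedding. -/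
/-!
Since `S - T = (Id - T) ∘ P` and `P` maps `E` into `E ∩ Y`, where `Id - T` is `δ'`-small, `S` is
a `δ' · dim E`-perturbation of `T`; a perturbation of size `ε/2` turns the `(1+δ)`-embedding `T`
into a `(1+ε)`-embedding because `(1+δ)⁻¹ - ε/2 ≥ 1 - δ - ε/2`, and the bound on `δ` is exactly
what makes the right-hand side at least `(1+ε)⁻¹`.
-/

section Perturbation

variable {F : Type*} [SeminormedAddCommGroup F]

theorem le_norm_of_norm_sub_le {u v : F} {a η r : ℝ} (hu : a * r ≤ ‖u‖)
    (hvu : ‖v - u‖ ≤ η * r) : (a - η) * r ≤ ‖v‖ := by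
  have := norm_le_norm_add_norm_sub v u
  linarith

theorem norm_le_of_norm_sub_le {u v : F} {b η r : ℝ} (hu : ‖u‖ ≤ b * r)
    (hvu : ‖v - u‖ ≤ η * r) : ‖v‖ ≤ (b + η) * r := by
  have := norm_le_norm_add_norm_sub' v u
  linarith

end Perturbation

theorem one_sub_le_inv_one_add {δ : ℝ} (hδ : 0 ≤ δ) : 1 - δ ≤ (1 + δ)⁻¹ := by
  rw [← one_div, le_div_iff₀ (by linarith)]
  nlinarith

theorem inv_one_add_le_inv_one_add_sub_half {δ ε : ℝ} (hδ : 0 ≤ δ) (hε : 0 ≤ ε)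
    (h : δ ≤ ε / 2 * ((1 - ε) / (1 + ε))) : (1 + ε)⁻¹ ≤ (1 + δ)⁻¹ - ε / 2 := by
  have hε_inv : (1 + ε)⁻¹ = 1 - ε / 2 - ε / 2 * ((1 - ε) / (1 + ε)) := by
    field_simp
    ring
  linarith [one_sub_le_inv_one_add hδ]

namespace Submodule

variable {𝕜 X : Type*} [NormedField 𝕜] [SeminormedAddCommGroup X] [NormedSpace 𝕜 X]
  {E : Submodule 𝕜 X}

def correction (P : E →L[𝕜] E) (T : E →L[𝕜] X) : E →L[𝕜] X :=
  E.subtypeL ∘L P + T ∘L (ContinuousLinearMap.id 𝕜 E - P)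

variable (P : E →L[𝕜] E) (T : E →L[𝕜] X)

theorem correction_apply (x : E) : correction P T x = (P x : X) + T (x - P x) := rfl

theorem correction_sub_apply (x : E) : correction P T x - T x = (P x : X) - T (P x) := by
  rw [correction_apply, map_sub]
  abel

theorem correction_apply_of_apply_eq {x : E} (hx : P x = x) : correction P T x = x := by
  rw [correction_apply, hx, sub_self, map_zero, add_zero]

theorem correction_mem {Y : Submodule 𝕜 X} (hPY : ∀ x, (P x : X) ∈ Y) (hTY : ∀ x, T x ∈ Y)
    (x : E) : correction P T x ∈ Y :=
  Y.add_mem (hPY x) (hTY _)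

theorem norm_correction_sub_le {Y : Set X} {δ' C : ℝ} (hδ' : 0 ≤ δ')
    (hTfix : ∀ x : E, (x : X) ∈ Y → ‖(x : X) - T x‖ ≤ δ' * ‖x‖)
    (hPY : ∀ x, (P x : X) ∈ Y) (hPnorm : ∀ x, ‖P x‖ ≤ C * ‖x‖) (x : E) :
    ‖correction P T x - T x‖ ≤ δ' * C * ‖x‖ := by
  rw [correction_sub_apply, mul_assoc]
  exact (hTfix (P x) (hPY x)).trans (mul_le_mul_of_nonneg_left (hPnorm x) hδ')

end Submodule

theorem correction_embedding_general {X : Type*} [NormedAddCommGroup X] [NormedSpace ℝ X]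
    (Y E : Submodule ℝ X)
    (δ δ' ε : ℝ) (hδ : 0 < δ) (hδ' : 0 ≤ δ') (hε : 0 < ε)
    (T : E →L[ℝ] X) (hTY : ∀ x : E, T x ∈ Y)
    (hTnorm : ∀ x : E, ‖T x‖ ≤ (1 + δ) * ‖x‖)
    (hTfix : ∀ x : E, (x : X) ∈ Y → ‖(x : X) - T x‖ ≤ δ' * ‖x‖)
    (P : E →L[ℝ] E)
    (hPY : ∀ x : E, ((P x : E) : X) ∈ Y)
    (hPfix : ∀ x : E, (x : X) ∈ Y → P x = x)
    (hPnorm : ∀ x : E, ‖P x‖ ≤ (Module.finrank ℝ E : ℝ) * ‖x‖) :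
    (∀ x : E, (x : X) ∈ Y → ((P x : X) + T (x - P x)) = (x : X)) ∧
    (∀ x : E, ‖((P x : X) + T (x - P x)) - T x‖ ≤ δ' * (Module.finrank ℝ E : ℝ) * ‖x‖) ∧
    ((∀ x : E, (1 + δ)⁻¹ * ‖x‖ ≤ ‖T x‖) →
      δ' * (Module.finrank ℝ E : ℝ) ≤ ε / 2 →
      δ ≤ min (ε / 2) (ε / 2 * ((1 - ε) / (1 + ε))) →
      ∀ x : E, ((P x : X) + T (x - P x)) ∈ Y ∧
        (1 + ε)⁻¹ * ‖x‖ ≤ ‖(P x : X) + T (x - P x)‖ ∧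
        ‖(P x : X) + T (x - P x)‖ ≤ (1 + ε) * ‖x‖) := by
  simp only [← Submodule.correction_apply]
  have hST := Submodule.norm_correction_sub_le P T hδ' hTfix hPY hPnorm
  refine ⟨fun x hx => Submodule.correction_apply_of_apply_eq P T (hPfix x hx), hST, ?_⟩
  intro hTlow hδ'n hδε x
  have hST_half : ‖Submodule.correction P T x - T x‖ ≤ ε / 2 * ‖x‖ :=
    (hST x).trans (by gcongr)
  refine ⟨Submodule.correction_mem P T hPY hTY x, ?_, ?_⟩
  · calc (1 + ε)⁻¹ * ‖x‖ ≤ ((1 + δ)⁻¹ - ε / 2) * ‖x‖ := by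
          gcongr
          exact inv_one_add_le_inv_one_add_sub_half hδ.le hε.le (hδε.trans (min_le_right _ _))
      _ ≤ ‖Submodule.correction P T x‖ := le_norm_of_norm_sub_le (hTlow x) hST_half
  · calc ‖Submodule.correction P T x‖ ≤ (1 + δ + ε / 2) * ‖x‖ :=
          norm_le_of_norm_sub_le (hTnorm x) hST_half
      _ ≤ (1 + ε) * ‖x‖ := by
          have := hδε.trans (min_le_left _ _)
          gcongr ?_ * _
          linarith

/-- The correction `S = P + T(Id − P)` of a `(1+δ)`-embedding `T : E → Y` which almost fixes
`E ∩ Y`: `S` fixes `E ∩ Y` pointwise, `‖Sx − Tx‖ ≤ δ'·(dim E)·‖x‖`, and if `T` is a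
`(1+δ)`-isomorphic embedding with `δ'·dim E ≤ ε/2` and
`δ ≤ min{ε/2, (ε/2)·(1−ε)/(1+ε)}`, `ε < 1`, then `S` is a `(1+ε)`-isomorphic embedding
into `Y`. -/
theorem correction_embedding {X : Type*} [NormedAddCommGroup X] [NormedSpace ℝ X]
    [CompleteSpace X] (Y E : Submodule ℝ X) (hY : IsClosed (Y : Set X))
    [FiniteDimensional ℝ E]
    (δ δ' ε : ℝ) (hδ : 0 < δ) (hδ1 : δ < 1) (hδ' : 0 ≤ δ') (hε : 0 < ε) (hε1 : ε < 1)
    (T : E →L[ℝ] X) (hTY : ∀ x : E, T x ∈ Y)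
    (hTnorm : ∀ x : E, ‖T x‖ ≤ (1 + δ) * ‖x‖)
    (hTfix : ∀ x : E, (x : X) ∈ Y → ‖(x : X) - T x‖ ≤ δ' * ‖x‖)
    (P : E →L[ℝ] E)
    (hPY : ∀ x : E, ((P x : E) : X) ∈ Y)
    (hPfix : ∀ x : E, (x : X) ∈ Y → P x = x)
    (hPnorm : ∀ x : E, ‖P x‖ ≤ (Module.finrank ℝ E : ℝ) * ‖x‖) :
    (∀ x : E, (x : X) ∈ Y → ((P x : X) + T (x - P x)) = (x : X)) ∧
    (∀ x : E, ‖((P x : X) + T (x - P x)) - T x‖ ≤ δ' * (Module.finrank ℝ E : ℝ) * ‖x‖) ∧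
    ((∀ x : E, (1 + δ)⁻¹ * ‖x‖ ≤ ‖T x‖) →
      δ' * (Module.finrank ℝ E : ℝ) ≤ ε / 2 →
      δ ≤ min (ε / 2) (ε / 2 * ((1 - ε) / (1 + ε))) →
      ∀ x : E, ((P x : X) + T (x - P x)) ∈ Y ∧
        (1 + ε)⁻¹ * ‖x‖ ≤ ‖(P x : X) + T (x - P x)‖ ∧
        ‖(P x : X) + T (x - P x)‖ ≤ (1 + ε) * ‖x‖) :=
  correction_embedding_general Y E δ δ' ε hδ hδ' hε T hTY hTnorm hTfix P hPY hPfix hPnorm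
end
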